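/- Let X₁, X₂ be Banach spaces and suppose T : X₁ × X₂ → Y is a bilinear operator that is multiple (3; 3, 2)-summing with constant C. Then T is multiple ((5,3); 5, 2)-summing with the same constant: for all finite families, (∑_i (∑_j ‖T(x¹_i,x²_j)‖^3)^{5/3})^{1/5} ≤ C ‖(x¹_i)‖_{w,5} ‖(x²_j)‖_{w,2}. -/

import Mathlib

open scoped BigOperators

/-! Let `ρᵢ` be the `ℓ_r`-norm of the `i`-th row `(T (x₁ i) (x₂ j))ⱼ` and `S = ∑ ρᵢ ^ s`, and let
`1/u = 1/r - 1/s = 1/p - 1/t`. Rescaling the first family to `ρᵢ ^ (s/u) • x₁ i` makes the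
`(r; p, q)`-inequality read `S ^ (1/r) ≤ C · w_p(rescaled) · w_q(x₂)`, and Hölder's inequality
bounds `w_p(rescaled) ≤ S ^ (1/u) · w_t(x₁)`. Since `1/r = 1/u + 1/s`, dividing by `S ^ (1/u)`
gives `S ^ (1/s) ≤ C · w_t(x₁) · w_q(x₂)`; here `(r, s, p, t, q, u) = (3, 5, 3, 5, 2, 15/2)`. -/

/-- The weak ℓ^p norm of a finite family in a normed space:
`sup_{φ ∈ B_{X'}} (∑ j |φ(x_j)|^p)^(1/p)`. -/
noncomputable def weakNorm {X : Type*} [NormedAddCommGroup X] [NormedSpace ℝ X]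
    {n : ℕ} (x : Fin n → X) (p : ℝ) : ℝ :=
  ⨆ φ : {φ : X →L[ℝ] ℝ // ‖φ‖ ≤ 1}, (∑ j, |φ.1 (x j)| ^ p) ^ (1 / p)

open Real Finset

section WeakNorm

variable {X : Type*} [NormedAddCommGroup X] [NormedSpace ℝ X] {n : ℕ}

lemma weakNorm_nonneg (x : Fin n → X) (p : ℝ) : 0 ≤ weakNorm x p :=
  Real.iSup_nonneg fun _ => rpow_nonneg (sum_nonneg fun _ _ => rpow_nonneg (abs_nonneg _) _) _

lemma bddAbove_weakNorm (x : Fin n → X) {p : ℝ} (hp : 0 ≤ p) :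
    BddAbove (Set.range fun φ : {φ : X →L[ℝ] ℝ // ‖φ‖ ≤ 1} =>
      (∑ j, |φ.1 (x j)| ^ p) ^ (1 / p)) := by
  refine ⟨(∑ j, ‖x j‖ ^ p) ^ (1 / p), ?_⟩
  rintro _ ⟨φ, rfl⟩
  dsimp only
  have hp' : 0 ≤ 1 / p := one_div_nonneg.2 hp
  gcongr with j
  exact (φ.1.le_of_opNorm_le φ.2 (x j)).trans_eq (one_mul _)

lemma le_weakNorm (x : Fin n → X) {p : ℝ} (hp : 0 ≤ p) (φ : {φ : X →L[ℝ] ℝ // ‖φ‖ ≤ 1}) :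
    (∑ j, |φ.1 (x j)| ^ p) ^ (1 / p) ≤ weakNorm x p :=
  le_ciSup (bddAbove_weakNorm x hp) φ

lemma weakNorm_smul_le {u t p : ℝ} (h : HolderTriple u t p) (c : Fin n → ℝ) (x : Fin n → X) :
    weakNorm (fun i => c i • x i) p ≤ (∑ i, |c i| ^ u) ^ (1 / u) * weakNorm x t := by
  have hc : 0 ≤ ∑ i, |c i| ^ u := sum_nonneg fun _ _ => rpow_nonneg (abs_nonneg _) _
  refine Real.iSup_le (fun φ => ?_) (mul_nonneg (rpow_nonneg hc _) (weakNorm_nonneg x t))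
  have hφ : 0 ≤ ∑ i, |φ.1 (x i)| ^ t := sum_nonneg fun _ _ => rpow_nonneg (abs_nonneg _) _
  have hp := h.one_div_nonneg'
  calc (∑ i, |φ.1 (c i • x i)| ^ p) ^ (1 / p)
      = (∑ i, |c i * φ.1 (x i)| ^ p) ^ (1 / p) := by simp only [map_smul, smul_eq_mul]
    _ ≤ ((∑ i, |c i| ^ u) ^ (p / u) * (∑ i, |φ.1 (x i)| ^ t) ^ (p / t)) ^ (1 / p) := by
        gcongr
        exact Real.Lr_rpow_le_Lp_mul_Lq univ c (fun i => φ.1 (x i)) h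
    _ = (∑ i, |c i| ^ u) ^ (1 / u) * (∑ i, |φ.1 (x i)| ^ t) ^ (1 / t) := by
        rw [mul_rpow (rpow_nonneg hc _) (rpow_nonneg hφ _), ← rpow_mul hc, ← rpow_mul hφ]
        field_simp [h.ne_zero']
    _ ≤ (∑ i, |c i| ^ u) ^ (1 / u) * weakNorm x t := by
        gcongr
        exact le_weakNorm x h.symm.nonneg φ

end WeakNorm

lemma Real.HolderTriple.rpow_rpow_mul_self {u s r : ℝ} (h : HolderTriple u s r) {R : ℝ}
    (hR : 0 ≤ R) : (R ^ (s / (u * r))) ^ r * R = R ^ (s / r) := by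
  have hs_div : s / u + 1 = s / r := by
    have := h.inv_add_inv_eq_inv
    field_simp [h.ne_zero, h.symm.ne_zero, h.ne_zero'] at this ⊢
    linarith
  rcases hR.eq_or_lt with h0 | hpos
  · rw [← h0, mul_zero, zero_rpow (div_pos h.symm.pos h.pos').ne']
  rw [← rpow_mul hR, ← rpow_add_one hpos.ne', ← hs_div]
  field_simp [h.ne_zero']

section MultipleSumming

variable {X₁ X₂ Y : Type*} [NormedAddCommGroup X₁] [NormedSpace ℝ X₁]
  [NormedAddCommGroup X₂] [NormedSpace ℝ X₂] [NormedAddCommGroup Y] [NormedSpace ℝ Y]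

/-- `T` is multiple `(r; p, q)`-summing with constant `C`. -/
def IsMultipleSumming (T : X₁ →L[ℝ] X₂ →L[ℝ] Y) (r p q C : ℝ) : Prop :=
  ∀ (n₁ n₂ : ℕ) (x1 : Fin n₁ → X₁) (x2 : Fin n₂ → X₂),
    (∑ i, ∑ j, ‖T (x1 i) (x2 j)‖ ^ r) ^ (1 / r) ≤ C * weakNorm x1 p * weakNorm x2 q

/-- `T` is multiple `((s, r); p, q)`-summing with constant `C`: the mixed `ℓ_s(ℓ_r)` norm replaces
the `ℓ_r` norm of the matrix `(T (x1 i) (x2 j))`. -/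
def IsMixedMultipleSumming (T : X₁ →L[ℝ] X₂ →L[ℝ] Y) (s r p q C : ℝ) : Prop :=
  ∀ (n₁ n₂ : ℕ) (x1 : Fin n₁ → X₁) (x2 : Fin n₂ → X₂),
    (∑ i, (∑ j, ‖T (x1 i) (x2 j)‖ ^ r) ^ (s / r)) ^ (1 / s) ≤ C * weakNorm x1 p * weakNorm x2 q

lemma sum_norm_rpow_smul_left (T : X₁ →L[ℝ] X₂ →L[ℝ] Y) (c : ℝ) (x : X₁) {n : ℕ}
    (y : Fin n → X₂) (r : ℝ) :
    ∑ j, ‖T (c • x) (y j)‖ ^ r = |c| ^ r * ∑ j, ‖T x (y j)‖ ^ r := by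
  simp only [map_smul, smul_apply, norm_smul, Real.norm_eq_abs,
    mul_rpow (abs_nonneg c) (norm_nonneg _), mul_sum]

theorem IsMultipleSumming.isMixedMultipleSumming {T : X₁ →L[ℝ] X₂ →L[ℝ] Y}
    {r s p t q u C : ℝ} (hr : HolderTriple u s r) (hp : HolderTriple u t p) (hC : 0 ≤ C)
    (hT : IsMultipleSumming T r p q C) : IsMixedMultipleSumming T s r t q C := by
  intro n₁ n₂ x1 x2
  set R : Fin n₁ → ℝ := fun i => ∑ j, ‖T (x1 i) (x2 j)‖ ^ r
  have hR (i : Fin n₁) : 0 ≤ R i := sum_nonneg fun _ _ => rpow_nonneg (norm_nonneg _) _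
  set S := ∑ i, R i ^ (s / r)
  have hS0 : 0 ≤ S := sum_nonneg fun i _ => rpow_nonneg (hR i) (s / r)
  obtain hS | hS := hS0.eq_or_lt
  · rw [← hS, zero_rpow hr.symm.one_div_ne_zero]
    exact mul_nonneg (mul_nonneg hC (weakNorm_nonneg x1 t)) (weakNorm_nonneg x2 q)
  -- `c i = ρᵢ ^ (s/u)` with `ρᵢ = R i ^ (1/r)` the `ℓ_r`-norm of the `i`-th row
  set c : Fin n₁ → ℝ := fun i => R i ^ (s / (u * r))
  have hc (i : Fin n₁) : |c i| = R i ^ (s / (u * r)) := abs_of_nonneg (rpow_nonneg (hR i) _)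
  have hrow (i : Fin n₁) : |c i| ^ r * R i = R i ^ (s / r) := by
    rw [hc]
    exact hr.rpow_rpow_mul_self (hR i)
  have hweight (i : Fin n₁) : |c i| ^ u = R i ^ (s / r) := by
    rw [hc, ← rpow_mul (hR i)]
    field_simp [hr.ne_zero]
  have key : S ^ (1 / u) * S ^ (1 / s) ≤ S ^ (1 / u) * (C * weakNorm x1 t * weakNorm x2 q) :=
    calc S ^ (1 / u) * S ^ (1 / s) = S ^ (1 / r) := by rw [← rpow_add hS, hr.one_div_eq]
      _ = (∑ i, |c i| ^ r * R i) ^ (1 / r) := by simp only [hrow, S]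
      _ = (∑ i, ∑ j, ‖T (c i • x1 i) (x2 j)‖ ^ r) ^ (1 / r) := by
          simp only [sum_norm_rpow_smul_left, R]
      _ ≤ C * weakNorm (fun i => c i • x1 i) p * weakNorm x2 q := hT _ _ _ _
      _ ≤ C * ((∑ i, |c i| ^ u) ^ (1 / u) * weakNorm x1 t) * weakNorm x2 q := by
          gcongr
          · exact weakNorm_nonneg x2 q
          · exact weakNorm_smul_le hp c x1
      _ = S ^ (1 / u) * (C * weakNorm x1 t * weakNorm x2 q) := by
          simp only [hweight, S]
          ring
  exact le_of_mul_le_mul_left key (rpow_pos_of_pos hS _)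

end MultipleSumming

theorem bilinear_inclusion_3_32_to_53_52_general
    {X₁ X₂ Y : Type*} [NormedAddCommGroup X₁] [NormedSpace ℝ X₁]
    [NormedAddCommGroup X₂] [NormedSpace ℝ X₂]
    [NormedAddCommGroup Y] [NormedSpace ℝ Y]
    (T : X₁ →L[ℝ] X₂ →L[ℝ] Y) (C : ℝ) (hC : 0 ≤ C)
    (hT : ∀ (n₁ n₂ : ℕ) (x1 : Fin n₁ → X₁) (x2 : Fin n₂ → X₂),
      (∑ i, ∑ j, ‖T (x1 i) (x2 j)‖ ^ (3 : ℝ)) ^ ((1 : ℝ) / 3) ≤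
        C * weakNorm x1 3 * weakNorm x2 2) :
    ∀ (n₁ n₂ : ℕ) (x1 : Fin n₁ → X₁) (x2 : Fin n₂ → X₂),
      (∑ i, (∑ j, ‖T (x1 i) (x2 j)‖ ^ (3 : ℝ)) ^ ((5 : ℝ) / 3)) ^ ((1 : ℝ) / 5) ≤
        C * weakNorm x1 5 * weakNorm x2 2 := by
  have h : HolderTriple (15 / 2) 5 3 := ⟨by norm_num, by norm_num, by norm_num⟩
  exact IsMultipleSumming.isMixedMultipleSumming h h hC hT

/-- **Numerical instance of the anisotropic inclusion theorem:**
`Π²_{(3;3,2)} ⊂ Π²_{((5,3);5,2)}` with the same constant. -/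
theorem bilinear_inclusion_3_32_to_53_52
    {X₁ X₂ Y : Type*} [NormedAddCommGroup X₁] [NormedSpace ℝ X₁] [CompleteSpace X₁]
    [NormedAddCommGroup X₂] [NormedSpace ℝ X₂] [CompleteSpace X₂]
    [NormedAddCommGroup Y] [NormedSpace ℝ Y] [CompleteSpace Y]
    (T : X₁ →L[ℝ] X₂ →L[ℝ] Y) (C : ℝ) (hC : 0 ≤ C)
    (hT : ∀ (n₁ n₂ : ℕ) (x1 : Fin n₁ → X₁) (x2 : Fin n₂ → X₂),
      (∑ i, ∑ j, ‖T (x1 i) (x2 j)‖ ^ (3 : ℝ)) ^ ((1 : ℝ) / 3) ≤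
        C * weakNorm x1 3 * weakNorm x2 2) :
    ∀ (n₁ n₂ : ℕ) (x1 : Fin n₁ → X₁) (x2 : Fin n₂ → X₂),
      (∑ i, (∑ j, ‖T (x1 i) (x2 j)‖ ^ (3 : ℝ)) ^ ((5 : ℝ) / 3)) ^ ((1 : ℝ) / 5) ≤
        C * weakNorm x1 5 * weakNorm x2 2 :=
  bilinear_inclusion_3_32_to_53_52_general T C hC hT
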